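/- arXiv:2510.18406 — 5 statements merged into one kernel-verified Lean document; each statement's English description precedes it below -/
import Mathlib

section
/- Let π, α ∈ (0,1) with α ≠ π, p_U = π·p₊ + (1−π)·p₋, p̃_T = α·p₊ + (1−α)·p₋, and let ℓ be a loss function. Define the supervised risk R(g) = π·E_{p₊}[ℓ(g(x),+1)] + (1−π)·E_{p₋}[ℓ(g(x),−1)]. Then R(g) = (1/(π−α))·[π(1−α)·E_{p_U}[ℓ(g(x),+1)] − π(1−π)·E_{p̃_T}[ℓ(g(x),+1)] − (1−π)α·E_{p_U}[ℓ(g(x),−1)] + (1−π)π·E_{p̃_T}[ℓ(g(x),−1)]]. -/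
open MeasureTheory

/-- Unbiased risk representation for NTMP.
With mixtures `p_U = π p₊ + (1−π) p₋`, `p̃_T = α p₊ + (1−α) p₋` (`α ≠ π`),
the supervised risk `R(g) = π E_{p₊}[ℓ(g x, +1)] + (1−π) E_{p₋}[ℓ(g x, −1)]`
can be rewritten using expectations under `p_U` and `p̃_T` only.
Expectations `E_p[h] = ∫ h(x) p(x) dμ` for a base measure `μ`. -/
theorem ntmp_unbiased_risk_representation
    {X : Type*} [MeasurableSpace X] (μ : Measure X)
    (pPos pNeg pU pT : X → ℝ) (π α : ℝ)
    (hπ : π ∈ Set.Ioo (0 : ℝ) 1) (hα : α ∈ Set.Ioo (0 : ℝ) 1) (hne : α ≠ π)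
    (hU : ∀ x, pU x = π * pPos x + (1 - π) * pNeg x)
    (hT : ∀ x, pT x = α * pPos x + (1 - α) * pNeg x)
    (g : X → ℝ) (ℓ : ℝ → ℤ → ℝ)
    (hi₁ : Integrable (fun x => ℓ (g x) 1 * pPos x) μ)
    (hi₂ : Integrable (fun x => ℓ (g x) 1 * pNeg x) μ)
    (hi₃ : Integrable (fun x => ℓ (g x) (-1) * pPos x) μ)
    (hi₄ : Integrable (fun x => ℓ (g x) (-1) * pNeg x) μ) :
    π * ∫ x, ℓ (g x) 1 * pPos x ∂μ + (1 - π) * ∫ x, ℓ (g x) (-1) * pNeg x ∂μ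
      = (1 / (π - α)) *
        (π * (1 - α) * ∫ x, ℓ (g x) 1 * pU x ∂μ
          - π * (1 - π) * ∫ x, ℓ (g x) 1 * pT x ∂μ
          - (1 - π) * α * ∫ x, ℓ (g x) (-1) * pU x ∂μ
          + (1 - π) * π * ∫ x, ℓ (g x) (-1) * pT x ∂μ) := by
  have key : ∀ (c : ℝ) (p : X → ℝ) (j : ℤ), (∀ x, p x = c * pPos x + (1 - c) * pNeg x) →
      Integrable (fun x => ℓ (g x) j * pPos x) μ →
      Integrable (fun x => ℓ (g x) j * pNeg x) μ →
      ∫ x, ℓ (g x) j * p x ∂μ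
        = c * ∫ x, ℓ (g x) j * pPos x ∂μ + (1 - c) * ∫ x, ℓ (g x) j * pNeg x ∂μ := by
    intro c p j hp h1 h2
    have : ∀ x, ℓ (g x) j * p x
        = c * (ℓ (g x) j * pPos x) + (1 - c) * (ℓ (g x) j * pNeg x) := by
      intro x; rw [hp x]; ring
    simp only [this]
    rw [integral_add (h1.const_mul c) (h2.const_mul (1 - c)),
      MeasureTheory.integral_const_mul, MeasureTheory.integral_const_mul]
  rw [key π pU 1 hU hi₁ hi₂, key α pT 1 hT hi₁ hi₂,
    key π pU (-1) hU hi₃ hi₄, key α pT (-1) hT hi₃ hi₄]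
  have hd : π - α ≠ 0 := sub_ne_zero.mpr (Ne.symm hne)
  field_simp
  ring
end

section
/- Let π ∈ (0,1), α ∈ (0,1), α ≠ π, and π̂ = π + δ ∈ (0,1) with π̂ ≠ α. Let p₊, p₋ be probability densities, p_U = π p₊ + (1−π) p₋, p̃_T = α p₊ + (1−α) p₋. Define the plug-in densities p̂₊ = ((1−α)p_U − (1−π̂)p̃_T)/(π̂−α) and p̂₋ = (−α p_U + π̂ p̃_T)/(π̂−α). Let φ be a loss with 0 ≤ φ ≤ B, R(g) = π E_{p₊}[φ(g(x))] + (1−π) E_{p₋}[φ(−g(x))], and R̃(g; π̂) the same expression with p̂₊, p̂₋ in place of p₊, p₋. Then for every measurable g, |R̃(g; π̂) − R(g)| ≤ 2B|δ|/γ², where γ = min over ξ in the closed interval between π and π̂ of |ξ − α|, assuming γ > 0. -/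
open MeasureTheory

set_option maxHeartbeats 1000000

/-- Risk bias under a misspecified class prior.
Plugging a misspecified prior `π̂ = π + δ` into the NTMP identification
formulas yields plug-in densities `p̂₊, p̂₋`; for any bounded loss
`0 ≤ φ ≤ B` the plug-in risk deviates from the true risk by at most
`2B|δ|/γ²`, where `γ = min_{ξ ∈ [π, π̂]} |ξ − α| > 0`. -/
theorem ntmp_prior_misspecification_bias
    {X : Type*} [MeasurableSpace X] (μ : Measure X)
    (pPos pNeg : X → ℝ) (hPos0 : ∀ x, 0 ≤ pPos x) (hNeg0 : ∀ x, 0 ≤ pNeg x)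
    (hPos1 : ∫ x, pPos x ∂μ = 1) (hNeg1 : ∫ x, pNeg x ∂μ = 1)
    (π α δ : ℝ) (hπ : π ∈ Set.Ioo (0 : ℝ) 1) (hα : α ∈ Set.Ioo (0 : ℝ) 1)
    (hπα : α ≠ π) (hpihat : π + δ ∈ Set.Ioo (0 : ℝ) 1) (hpihatA : π + δ ≠ α)
    (pU pT pPosHat pNegHat : X → ℝ)
    (hU : ∀ x, pU x = π * pPos x + (1 - π) * pNeg x)
    (hT : ∀ x, pT x = α * pPos x + (1 - α) * pNeg x)
    (hPosHat : ∀ x, pPosHat x = ((1 - α) * pU x - (1 - (π + δ)) * pT x) / ((π + δ) - α))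
    (hNegHat : ∀ x, pNegHat x = (-α * pU x + (π + δ) * pT x) / ((π + δ) - α))
    (φ : ℝ → ℝ) (B : ℝ) (hφ : ∀ t, φ t ∈ Set.Icc (0 : ℝ) B)
    (g : X → ℝ) (hg : Measurable g)
    (hi₁ : Integrable (fun x => φ (g x) * pPos x) μ)
    (hi₂ : Integrable (fun x => φ (g x) * pNeg x) μ)
    (hi₃ : Integrable (fun x => φ (-g x) * pPos x) μ)
    (hi₄ : Integrable (fun x => φ (-g x) * pNeg x) μ)
    (γ : ℝ) (hγ : γ = sInf ((fun ξ => |ξ - α|) '' Set.uIcc π (π + δ)))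
    (hγ0 : 0 < γ) :
    |(π * ∫ x, φ (g x) * pPosHat x ∂μ + (1 - π) * ∫ x, φ (-g x) * pNegHat x ∂μ)
      - (π * ∫ x, φ (g x) * pPos x ∂μ + (1 - π) * ∫ x, φ (-g x) * pNeg x ∂μ)|
      ≤ 2 * B * |δ| / γ ^ 2 := by
  obtain ⟨hπ0, hπ1⟩ := hπ
  obtain ⟨hα0, hα1⟩ := hα
  obtain ⟨hh0, hh1⟩ := hpihat
  set D : ℝ := (π + δ) - α with hDdef
  have hD0 : D ≠ 0 := sub_ne_zero.mpr hpihatA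
  set c₁ : ℝ := (1 - α) * δ / D with hc₁
  set c₂ : ℝ := α * δ / D with hc₂
  -- pointwise identities for the plug-in densities
  have hph : ∀ x, pPosHat x = (1 - c₁) * pPos x + c₁ * pNeg x := by
    intro x
    rw [hPosHat, hU, hT, hc₁]
    field_simp
    ring
  have hnh : ∀ x, pNegHat x = c₂ * pPos x + (1 - c₂) * pNeg x := by
    intro x
    rw [hNegHat, hU, hT, hc₂]
    field_simp
    ring
  -- integrability of the densities
  have hInt1 : Integrable pPos μ := by
    by_contra h
    rw [integral_undef h] at hPos1
    exact one_ne_zero hPos1.symm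
  have hInt2 : Integrable pNeg μ := by
    by_contra h
    rw [integral_undef h] at hNeg1
    exact one_ne_zero hNeg1.symm
  set I₁ : ℝ := ∫ x, φ (g x) * pPos x ∂μ with hI₁
  set I₂ : ℝ := ∫ x, φ (g x) * pNeg x ∂μ with hI₂
  set I₃ : ℝ := ∫ x, φ (-g x) * pPos x ∂μ with hI₃
  set I₄ : ℝ := ∫ x, φ (-g x) * pNeg x ∂μ with hI₄
  have hB0 : (0 : ℝ) ≤ B := le_trans (hφ 0).1 (hφ 0).2
  -- bounds on the four integrals
  have bnd : ∀ (f : X → ℝ), (∀ x, 0 ≤ f x) → Integrable f μ → (∫ x, f x ∂μ = 1) →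
      ∀ (h : X → ℝ), Integrable (fun x => φ (h x) * f x) μ →
      (0 ≤ ∫ x, φ (h x) * f x ∂μ) ∧ (∫ x, φ (h x) * f x ∂μ ≤ B) := by
    intro f hf0 hfi hf1 h hint
    constructor
    · exact integral_nonneg fun x => mul_nonneg (hφ _).1 (hf0 x)
    · have : ∫ x, φ (h x) * f x ∂μ ≤ ∫ x, B * f x ∂μ :=
        integral_mono hint (hfi.const_mul B)
          (fun x => mul_le_mul_of_nonneg_right (hφ _).2 (hf0 x))
      rwa [integral_const_mul, hf1, mul_one] at this
  obtain ⟨h1a, h1b⟩ := bnd pPos hPos0 hInt1 hPos1 g hi₁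
  obtain ⟨h2a, h2b⟩ := bnd pNeg hNeg0 hInt2 hNeg1 g hi₂
  obtain ⟨h3a, h3b⟩ := bnd pPos hPos0 hInt1 hPos1 (fun x => -g x) hi₃
  obtain ⟨h4a, h4b⟩ := bnd pNeg hNeg0 hInt2 hNeg1 (fun x => -g x) hi₄
  -- compute the plug-in integrals
  have hJ1 : ∫ x, φ (g x) * pPosHat x ∂μ = (1 - c₁) * I₁ + c₁ * I₂ := by
    rw [hI₁, hI₂, ← integral_const_mul, ← integral_const_mul,
      ← integral_add (hi₁.const_mul _) (hi₂.const_mul _)]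
    apply integral_congr_ae
    filter_upwards with x
    rw [hph x]; ring
  have hJ2 : ∫ x, φ (-g x) * pNegHat x ∂μ = c₂ * I₃ + (1 - c₂) * I₄ := by
    rw [hI₃, hI₄, ← integral_const_mul, ← integral_const_mul,
      ← integral_add (hi₃.const_mul _) (hi₄.const_mul _)]
    apply integral_congr_ae
    filter_upwards with x
    rw [hnh x]; ring
  -- gamma facts
  have hbdd : BddBelow ((fun ξ => |ξ - α|) '' Set.uIcc π (π + δ)) := by
    refine ⟨0, ?_⟩
    rintro y ⟨ξ, -, rfl⟩
    exact abs_nonneg _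
  have hγD : γ ≤ |D| := by
    rw [hγ]
    exact csInf_le hbdd ⟨π + δ, Set.right_mem_uIcc, rfl⟩
  have hγ1 : γ ≤ 1 := by
    have h : γ ≤ |π - α| := by
      rw [hγ]
      exact csInf_le hbdd ⟨π, Set.left_mem_uIcc, rfl⟩
    have : |π - α| ≤ 1 := by
      rw [abs_le]; constructor <;> linarith
    linarith
  have hγsq : γ ^ 2 ≤ |D| := by
    have : γ ^ 2 ≤ |D| * 1 := by
      rw [pow_two]
      exact mul_le_mul hγD hγ1 (le_of_lt hγ0) (abs_nonneg _)
    linarith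
  have hDpos : (0 : ℝ) < |D| := abs_pos.mpr hD0
  -- absolute values of coefficients
  have hc1abs : |c₁| = (1 - α) * |δ| / |D| := by
    rw [hc₁, abs_div, abs_mul, abs_of_nonneg (by linarith : (0:ℝ) ≤ 1 - α)]
  have hc2abs : |c₂| = α * |δ| / |D| := by
    rw [hc₂, abs_div, abs_mul, abs_of_nonneg (le_of_lt hα0)]
  -- main estimate
  have key : |(π * ((1 - c₁) * I₁ + c₁ * I₂) + (1 - π) * (c₂ * I₃ + (1 - c₂) * I₄))
      - (π * I₁ + (1 - π) * I₄)| ≤ B * |δ| / |D| := by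
    have heq : (π * ((1 - c₁) * I₁ + c₁ * I₂) + (1 - π) * (c₂ * I₃ + (1 - c₂) * I₄))
        - (π * I₁ + (1 - π) * I₄) = π * c₁ * (I₂ - I₁) + (1 - π) * c₂ * (I₃ - I₄) := by
      ring
    rw [heq]
    have h12 : |I₂ - I₁| ≤ B := abs_le.mpr ⟨by linarith, by linarith⟩
    have h34 : |I₃ - I₄| ≤ B := abs_le.mpr ⟨by linarith, by linarith⟩
    calc |π * c₁ * (I₂ - I₁) + (1 - π) * c₂ * (I₃ - I₄)|
        ≤ |π * c₁ * (I₂ - I₁)| + |(1 - π) * c₂ * (I₃ - I₄)| := abs_add_le _ _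
      _ = π * |c₁| * |I₂ - I₁| + (1 - π) * |c₂| * |I₃ - I₄| := by
          rw [abs_mul, abs_mul, abs_mul, abs_mul,
            abs_of_nonneg (le_of_lt hπ0), abs_of_nonneg (by linarith : (0:ℝ) ≤ 1 - π)]
      _ ≤ π * |c₁| * B + (1 - π) * |c₂| * B := by
          have e1 : π * |c₁| * |I₂ - I₁| ≤ π * |c₁| * B :=
            mul_le_mul_of_nonneg_left h12 (mul_nonneg (le_of_lt hπ0) (abs_nonneg _))
          have e2 : (1 - π) * |c₂| * |I₃ - I₄| ≤ (1 - π) * |c₂| * B :=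
            mul_le_mul_of_nonneg_left h34 (mul_nonneg (by linarith) (abs_nonneg _))
          linarith
      _ = (π * (1 - α) + (1 - π) * α) * (B * |δ| / |D|) := by
          rw [hc1abs, hc2abs]; ring
      _ ≤ 1 * (B * |δ| / |D|) := by
          have h01 : π * (1 - α) + (1 - π) * α ≤ 1 := by
            nlinarith [mul_nonneg (le_of_lt hπ0) (le_of_lt hα0),
              mul_nonneg (by linarith : (0:ℝ) ≤ 1 - π) (by linarith : (0:ℝ) ≤ 1 - α)]
          exact mul_le_mul_of_nonneg_right h01 (by positivity)
      _ = B * |δ| / |D| := one_mul _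
  rw [hJ1, hJ2]
  calc |(π * ((1 - c₁) * I₁ + c₁ * I₂) + (1 - π) * (c₂ * I₃ + (1 - c₂) * I₄))
      - (π * I₁ + (1 - π) * I₄)| ≤ B * |δ| / |D| := key
    _ ≤ B * |δ| / γ ^ 2 := by
        apply div_le_div_of_nonneg_left (by positivity) (by positivity) hγsq
    _ ≤ 2 * B * |δ| / γ ^ 2 := by
        have hnum : B * |δ| ≤ 2 * B * |δ| := by
          have := mul_nonneg hB0 (abs_nonneg δ); linarith
        have hp : (0:ℝ) < γ ^ 2 := by positivity
        exact (div_le_div_iff_of_pos_right hp).mpr hnum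
end

section
/- Let π ∈ (0,1), α = m/n with π ≠ α, p_U = π p₊ + (1−π) p₋, p̃_T = α p₊ + (1−α) p₋, and let α̂ ∈ (0,1) with α̂ ≠ π. Define plug-in densities p̂₊ = ((1−α̂)p_U − (1−π)p̃_T)/(π−α̂), p̂₋ = (−α̂ p_U + π p̃_T)/(π−α̂), and the plug-in risk R̃(g; α̂) = π E_{p̂₊}[φ(g(x))] + (1−π) E_{p̂₋}[φ(−g(x))]. If 0 ≤ φ ≤ B, then for every g, |R̃(g; α̂) − R(g)| ≤ 2B|α̂ − α|/η², where η = min over ζ in the closed interval between α and α̂ of |π − ζ|, assuming η > 0. -/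
open MeasureTheory

lemma ntmp_aux_abs_bound {π a d e : ℝ} (hπ0 : 0 < π) (hπ1 : π < 1)
    (he0 : 0 < e) (he1 : e < 1) (hed : e ≤ |d|) :
    |π * (1 - π) * a / d| ≤ |a| / e ^ 2 := by
  have hd0 : 0 < |d| := lt_of_lt_of_le he0 hed
  rw [abs_div, abs_mul, abs_mul, abs_of_pos hπ0,
    abs_of_pos (by linarith : (0:ℝ) < 1 - π)]
  rw [div_le_div_iff₀ hd0 (pow_pos he0 2)]
  have h1 : π * (1 - π) ≤ 1 := by nlinarith
  have h2 : e ^ 2 ≤ |d| := by nlinarith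
  nlinarith [mul_nonneg (abs_nonneg a) (sq_nonneg e), abs_nonneg a, sq_nonneg e]

/-- Risk bias under a misspecified tuple count (fixed realization).
Plugging a misspecified mixing rate `α̂` (in place of `α = m/n`) into the
NTMP identification formulas yields plug-in densities; for `0 ≤ φ ≤ B` the
plug-in risk deviates from the true risk by at most `2B|α̂ − α|/η²`, where
`η = min_{ζ ∈ [α, α̂]} |π − ζ| > 0`. -/
theorem ntmp_count_misspecification_bias
    {X : Type*} [MeasurableSpace X] (μ : Measure X)
    (pPos pNeg : X → ℝ) (hPos0 : ∀ x, 0 ≤ pPos x) (hNeg0 : ∀ x, 0 ≤ pNeg x)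
    (hPos1 : ∫ x, pPos x ∂μ = 1) (hNeg1 : ∫ x, pNeg x ∂μ = 1)
    (π : ℝ) (n m : ℕ) (hn : 0 < n) (hm : m ≤ n) (α : ℝ) (hαdef : α = (m : ℝ) / n)
    (hπ : π ∈ Set.Ioo (0 : ℝ) 1) (hπα : π ≠ α)
    (αhat : ℝ) (hαhat : αhat ∈ Set.Ioo (0 : ℝ) 1) (hαhatπ : αhat ≠ π)
    (pU pT pPosHat pNegHat : X → ℝ)
    (hU : ∀ x, pU x = π * pPos x + (1 - π) * pNeg x)
    (hT : ∀ x, pT x = α * pPos x + (1 - α) * pNeg x)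
    (hPosHat : ∀ x, pPosHat x = ((1 - αhat) * pU x - (1 - π) * pT x) / (π - αhat))
    (hNegHat : ∀ x, pNegHat x = (-αhat * pU x + π * pT x) / (π - αhat))
    (φ : ℝ → ℝ) (B : ℝ) (hφ : ∀ t, φ t ∈ Set.Icc (0 : ℝ) B)
    (g : X → ℝ) (hg : Measurable g)
    (hi₁ : Integrable (fun x => φ (g x) * pPos x) μ)
    (hi₂ : Integrable (fun x => φ (g x) * pNeg x) μ)
    (hi₃ : Integrable (fun x => φ (-g x) * pPos x) μ)
    (hi₄ : Integrable (fun x => φ (-g x) * pNeg x) μ)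
    (η : ℝ) (hη : η = sInf ((fun ζ => |π - ζ|) '' Set.uIcc α αhat))
    (hη0 : 0 < η) :
    |(π * ∫ x, φ (g x) * pPosHat x ∂μ + (1 - π) * ∫ x, φ (-g x) * pNegHat x ∂μ)
      - (π * ∫ x, φ (g x) * pPos x ∂μ + (1 - π) * ∫ x, φ (-g x) * pNeg x ∂μ)|
      ≤ 2 * B * |αhat - α| / η ^ 2 := by

  obtain ⟨hπ0, hπ1⟩ := hπ
  obtain ⟨ha0, ha1⟩ := hαhat
  have hd : π - αhat ≠ 0 := sub_ne_zero.mpr (Ne.symm hαhatπ)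
  set c₁ : ℝ := (1 - π) * (α - αhat) / (π - αhat) with hc₁
  set c₂ : ℝ := π * (α - αhat) / (π - αhat) with hc₂
  set I₁ := ∫ x, φ (g x) * pPos x ∂μ
  set I₂ := ∫ x, φ (g x) * pNeg x ∂μ
  set I₃ := ∫ x, φ (-g x) * pPos x ∂μ
  set I₄ := ∫ x, φ (-g x) * pNeg x ∂μ
  have hP : ∀ x, pPosHat x = pPos x + c₁ * (pNeg x - pPos x) := by
    intro x
    rw [hPosHat, hU, hT, hc₁]
    field_simp
    ring
  have hN : ∀ x, pNegHat x = pNeg x + c₂ * (pPos x - pNeg x) := by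
    intro x
    rw [hNegHat, hU, hT, hc₂]
    field_simp
    ring
  have hIP : ∫ x, φ (g x) * pPosHat x ∂μ = I₁ + c₁ * (I₂ - I₁) := by
    have heq : (fun x => φ (g x) * pPosHat x)
        = fun x => φ (g x) * pPos x + c₁ * (φ (g x) * pNeg x - φ (g x) * pPos x) := by
      funext x; rw [hP x]; ring
    have hint' : Integrable (fun x => c₁ * (φ (g x) * pNeg x - φ (g x) * pPos x)) μ :=
      (hi₂.sub hi₁).const_mul c₁
    rw [heq, integral_add hi₁ hint', integral_const_mul, integral_sub hi₂ hi₁]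
  have hIN : ∫ x, φ (-g x) * pNegHat x ∂μ = I₄ + c₂ * (I₃ - I₄) := by
    have heq : (fun x => φ (-g x) * pNegHat x)
        = fun x => φ (-g x) * pNeg x + c₂ * (φ (-g x) * pPos x - φ (-g x) * pNeg x) := by
      funext x; rw [hN x]; ring
    have hint' : Integrable (fun x => c₂ * (φ (-g x) * pPos x - φ (-g x) * pNeg x)) μ :=
      (hi₃.sub hi₄).const_mul c₂
    rw [heq, integral_add hi₄ hint', integral_const_mul, integral_sub hi₃ hi₄]
  set c : ℝ := π * (1 - π) * (α - αhat) / (π - αhat) with hc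
  have hΔ : (π * ∫ x, φ (g x) * pPosHat x ∂μ + (1 - π) * ∫ x, φ (-g x) * pNegHat x ∂μ)
      - (π * I₁ + (1 - π) * I₄) = c * ((I₂ - I₁) + (I₃ - I₄)) := by
    rw [hIP, hIN, hc, hc₁, hc₂]
    field_simp
    ring
  rw [hΔ]
  -- integrability of densities
  have hintP : Integrable pPos μ := by
    by_contra h
    rw [integral_undef h] at hPos1
    norm_num at hPos1
  have hintN : Integrable pNeg μ := by
    by_contra h
    rw [integral_undef h] at hNeg1
    norm_num at hNeg1
  have hB0 : 0 ≤ B := le_trans (hφ 0).1 (hφ 0).2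
  -- bounds on the integrals
  have hbound : ∀ (f : X → ℝ) (p : X → ℝ), (∀ x, 0 ≤ p x) → (∫ x, p x ∂μ = 1) →
      Integrable p μ → Integrable (fun x => φ (f x) * p x) μ →
      (0 ≤ ∫ x, φ (f x) * p x ∂μ) ∧ (∫ x, φ (f x) * p x ∂μ ≤ B) := by
    intro f p hp0 hp1 hpi hfi
    constructor
    · exact integral_nonneg fun x => mul_nonneg (hφ (f x)).1 (hp0 x)
    · calc ∫ x, φ (f x) * p x ∂μ ≤ ∫ x, B * p x ∂μ := by
            apply integral_mono hfi (hpi.const_mul B)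
            intro x
            exact mul_le_mul_of_nonneg_right (hφ (f x)).2 (hp0 x)
        _ = B := by rw [integral_const_mul, hp1, mul_one]
  obtain ⟨h1a, h1b⟩ := hbound g pPos hPos0 hPos1 hintP hi₁
  obtain ⟨h2a, h2b⟩ := hbound g pNeg hNeg0 hNeg1 hintN hi₂
  obtain ⟨h3a, h3b⟩ := hbound (fun x => -g x) pPos hPos0 hPos1 hintP hi₃
  obtain ⟨h4a, h4b⟩ := hbound (fun x => -g x) pNeg hNeg0 hNeg1 hintN hi₄
  have hsum : |(I₂ - I₁) + (I₃ - I₄)| ≤ 2 * B := by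
    calc |(I₂ - I₁) + (I₃ - I₄)| ≤ |I₂ - I₁| + |I₃ - I₄| := abs_add_le _ _
      _ ≤ B + B := by
          gcongr
          · rw [abs_sub_le_iff]; constructor <;> linarith
          · rw [abs_sub_le_iff]; constructor <;> linarith
      _ = 2 * B := by ring
  -- η ≤ |π - αhat| and η < 1
  have hηle : η ≤ |π - αhat| := by
    rw [hη]
    apply csInf_le
    · exact ⟨0, fun y ⟨ζ, _, hζ⟩ => hζ ▸ abs_nonneg _⟩
    · exact ⟨αhat, Set.right_mem_uIcc, rfl⟩
  have hdabs : |π - αhat| < 1 := by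
    rw [abs_sub_lt_iff]; constructor <;> linarith
  have hη1 : η < 1 := lt_of_le_of_lt hηle hdabs
  have hcabs : |c| ≤ |αhat - α| / η ^ 2 := by
    rw [hc, abs_sub_comm αhat α]
    exact ntmp_aux_abs_bound hπ0 hπ1 hη0 hη1 hηle
  calc |c * ((I₂ - I₁) + (I₃ - I₄))| = |c| * |(I₂ - I₁) + (I₃ - I₄)| := abs_mul _ _
    _ ≤ (|αhat - α| / η ^ 2) * (2 * B) := by
        apply mul_le_mul hcabs hsum (abs_nonneg _) (by positivity)
    _ = 2 * B * |αhat - α| / η ^ 2 := by ring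
end

section
/- Let α̂ be a random variable with E[(α̂ − α)²] = σ_α². Then E[|α̂ − α|] ≤ σ_α, and consequently in the count-misspecification setting sup_g |R̄(g) − R(g)| ≤ (2B/η̲²)·σ_α and R(ḡ) − R(g*) ≤ (4B/η̲²)·σ_α, where R̄(g) = E_{α̂}[R̃(g; α̂)] and ḡ minimizes R̄ over G. -/
open MeasureTheory ProbabilityTheory

section Jensen

variable {Ω : Type*} [MeasurableSpace Ω] {μ : Measure Ω} [IsProbabilityMeasure μ] {X : Ω → ℝ}

theorem sq_integral_le_integral_sq (hX : MemLp X 2 μ) : (∫ ω, X ω ∂μ) ^ 2 ≤ ∫ ω, X ω ^ 2 ∂μ := by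
  have h := variance_nonneg X μ
  rw [variance_eq_sub hX] at h
  simpa [sub_nonneg] using h

theorem integral_abs_le_sqrt_integral_sq (hX : MemLp X 2 μ) :
    ∫ ω, |X ω| ∂μ ≤ √(∫ ω, X ω ^ 2 ∂μ) := by
  refine Real.le_sqrt_of_sq_le ?_
  simpa only [sq_abs] using sq_integral_le_integral_sq (X := fun ω => |X ω|) hX.abs

end Jensen

theorem sub_le_two_mul_of_forall_abs_sub_le {G : Type*} {R Rbar : G → ℝ} {ε : ℝ}
    (hclose : ∀ g, |Rbar g - R g| ≤ ε) {gbar : G} (hbar : ∀ g, Rbar gbar ≤ Rbar g) (g : G) :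
    R gbar - R g ≤ 2 * ε := by
  have h₁ := abs_le.mp (hclose gbar)
  have h₂ := abs_le.mp (hclose g)
  linarith [hbar g]

theorem ntmp_count_misspecification_variance_form_general
    {Ω : Type*} [MeasureSpace Ω] [IsProbabilityMeasure (ℙ : Measure Ω)]
    (αhat : Ω → ℝ) (α : ℝ) (hL2 : MemLp (fun ω => αhat ω - α) 2 ℙ)
    (σα : ℝ) (hσα0 : 0 ≤ σα) (hσα : σα ^ 2 = ∫ ω, (αhat ω - α) ^ 2)
    (B ηl : ℝ) (hB : 0 ≤ B)
    {G : Type*} (R Rbar : G → ℝ)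
    -- the uniform expected-bias bound from the count-misspecification theorem
    (hbias : ∀ g, |Rbar g - R g| ≤ (2 * B / ηl ^ 2) * ∫ ω, |αhat ω - α|)
    (gstar gbar : G)
    (hbar : ∀ g, Rbar gbar ≤ Rbar g) :
    (∫ ω, |αhat ω - α|) ≤ σα ∧
    (∀ g, |Rbar g - R g| ≤ (2 * B / ηl ^ 2) * σα) ∧
    R gbar - R gstar ≤ (4 * B / ηl ^ 2) * σα := by
  have hmean : (∫ ω, |αhat ω - α|) ≤ σα := by
    simpa only [← hσα, Real.sqrt_sq hσα0] using integral_abs_le_sqrt_integral_sq hL2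
  have hunif : ∀ g, |Rbar g - R g| ≤ (2 * B / ηl ^ 2) * σα := fun g =>
    (hbias g).trans (mul_le_mul_of_nonneg_left hmean (by positivity))
  refine ⟨hmean, hunif, ?_⟩
  calc R gbar - R gstar ≤ 2 * ((2 * B / ηl ^ 2) * σα) :=
        sub_le_two_mul_of_forall_abs_sub_le hunif hbar gstar
    _ = (4 * B / ηl ^ 2) * σα := by ring

/-- Variance-form bounds for random count misspecification.
`E|α̂ − α| ≤ σ_α` (Cauchy–Schwarz/Jensen), hence the uniform bias bound
`sup_g |R̄(g) − R(g)| ≤ (2B/η̲²)σ_α` and the excess-risk bound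
`R(ḡ) − R(g*) ≤ (4B/η̲²)σ_α`. -/
theorem ntmp_count_misspecification_variance_form
    {Ω : Type*} [MeasureSpace Ω] [IsProbabilityMeasure (ℙ : Measure Ω)]
    (αhat : Ω → ℝ) (α : ℝ) (hL2 : MemLp (fun ω => αhat ω - α) 2 ℙ)
    (σα : ℝ) (hσα0 : 0 ≤ σα) (hσα : σα ^ 2 = ∫ ω, (αhat ω - α) ^ 2)
    (B ηl : ℝ) (hB : 0 ≤ B) (hηl : 0 < ηl)
    {G : Type*} (R Rbar : G → ℝ)
    -- the uniform expected-bias bound from the count-misspecification theorem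
    (hbias : ∀ g, |Rbar g - R g| ≤ (2 * B / ηl ^ 2) * ∫ ω, |αhat ω - α|)
    (gstar gbar : G)
    (hstar : ∀ g, R gstar ≤ R g)
    (hbar : ∀ g, Rbar gbar ≤ Rbar g) :
    (∫ ω, |αhat ω - α|) ≤ σα ∧
    (∀ g, |Rbar g - R g| ≤ (2 * B / ηl ^ 2) * σα) ∧
    R gbar - R gstar ≤ (4 * B / ηl ^ 2) * σα :=
  ntmp_count_misspecification_variance_form_general αhat α hL2 σα hσα0 hσα B ηl hB R Rbar hbias
    gstar gbar hbar
end

section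
/- Suppose ᾱ = π (degenerate case), but the tuples can be partitioned into two strata S₁ and S₂ with effective rates ᾱ₁ ≠ ᾱ₂ and, for each stratum i, ᾱᵢ ≠ π or the pair (ᾱ₁, ᾱ₂) with the two stratum-level tuple expectations T₁(g), T₂(g) determines (R₊(g), R₋(g)). Concretely: if ᾱ₁ ≠ ᾱ₂, then the 2×2 system [[ᾱ₁, 1−ᾱ₁],[ᾱ₂, 1−ᾱ₂]]·[R₊, R₋]ᵀ = [T₁, T₂]ᵀ is invertible, so R₊ and R₋ (and hence the risk R(g) = π R₊ + (1−π) R₋) are identified from stratum-level tuple observables alone. -/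
section MixingSystem

variable {K : Type*}

theorem det_mixing_matrix [CommRing K] (a b : K) :
    (Matrix.of ![![a, 1 - a], ![b, 1 - b]]).det = a - b := by
  rw [Matrix.det_fin_two_of]
  ring

variable [Field K] {a b p n T₁ T₂ : K}

theorem isUnit_mixing_matrix (hab : a ≠ b) :
    IsUnit (Matrix.of ![![a, 1 - a], ![b, 1 - b]]) := by
  rw [Matrix.isUnit_iff_isUnit_det, det_mixing_matrix]
  exact (sub_ne_zero.mpr hab).isUnit

-- Cramer's rule for the system with determinant `a - b`.
theorem pos_eq_of_mixtures (hab : a ≠ b) (h₁ : T₁ = a * p + (1 - a) * n)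
    (h₂ : T₂ = b * p + (1 - b) * n) :
    p = ((1 - b) * T₁ - (1 - a) * T₂) / (a - b) := by
  rw [eq_div_iff (sub_ne_zero.mpr hab)]
  linear_combination (1 - a) * h₂ - (1 - b) * h₁

theorem neg_eq_of_mixtures (hab : a ≠ b) (h₁ : T₁ = a * p + (1 - a) * n)
    (h₂ : T₂ = b * p + (1 - b) * n) :
    n = (a * T₂ - b * T₁) / (a - b) := by
  rw [eq_div_iff (sub_ne_zero.mpr hab)]
  linear_combination b * h₁ - a * h₂

end MixingSystem

theorem ntmp_stratify_and_solve_general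
    (π α1 α2 : ℝ) (hne : α1 ≠ α2)
    (Rpos Rneg T1 T2 : ℝ)
    (hT1 : T1 = α1 * Rpos + (1 - α1) * Rneg)
    (hT2 : T2 = α2 * Rpos + (1 - α2) * Rneg) :
    IsUnit (Matrix.of ![![α1, 1 - α1], ![α2, 1 - α2]]) ∧
    Rpos = ((1 - α2) * T1 - (1 - α1) * T2) / (α1 - α2) ∧
    Rneg = (α1 * T2 - α2 * T1) / (α1 - α2) ∧
    π * Rpos + (1 - π) * Rneg =
      π * (((1 - α2) * T1 - (1 - α1) * T2) / (α1 - α2))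
        + (1 - π) * ((α1 * T2 - α2 * T1) / (α1 - α2)) ∧
    (∀ Rpos' Rneg' : ℝ,
      T1 = α1 * Rpos' + (1 - α1) * Rneg' →
      T2 = α2 * Rpos' + (1 - α2) * Rneg' →
      Rpos' = Rpos ∧ Rneg' = Rneg) := by
  have hpos := pos_eq_of_mixtures hne hT1 hT2
  have hneg := neg_eq_of_mixtures hne hT1 hT2
  refine ⟨isUnit_mixing_matrix hne, hpos, hneg, by rw [← hpos, ← hneg], ?_⟩
  intro Rpos' Rneg' h1 h2
  exact ⟨(pos_eq_of_mixtures hne h1 h2).trans hpos.symm,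
    (neg_eq_of_mixtures hne h1 h2).trans hneg.symm⟩

/-- Stratify-and-solve identifiability in the degenerate case
`ᾱ = π`.  If the tuples split into two strata with effective rates
`ᾱ₁ ≠ ᾱ₂` and stratum-level expectations `Tᵢ = ᾱᵢR₊ + (1−ᾱᵢ)R₋`, then the
stratified 2×2 system is invertible (determinant `ᾱ₁ − ᾱ₂ ≠ 0`), so
`R₊`, `R₋` — and hence the risk `R = πR₊ + (1−π)R₋` — are identified from
stratum-level tuple observables alone. -/
theorem ntmp_stratify_and_solve
    (αbar π α1 α2 : ℝ) (hdeg : αbar = π)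
    (hα1 : α1 ∈ Set.Ioo (0 : ℝ) 1) (hα2 : α2 ∈ Set.Ioo (0 : ℝ) 1)
    (hπ : π ∈ Set.Ioo (0 : ℝ) 1) (hne : α1 ≠ α2)
    (Rpos Rneg T1 T2 : ℝ)
    (hT1 : T1 = α1 * Rpos + (1 - α1) * Rneg)
    (hT2 : T2 = α2 * Rpos + (1 - α2) * Rneg) :
    IsUnit (Matrix.of ![![α1, 1 - α1], ![α2, 1 - α2]]) ∧
    Rpos = ((1 - α2) * T1 - (1 - α1) * T2) / (α1 - α2) ∧
    Rneg = (α1 * T2 - α2 * T1) / (α1 - α2) ∧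
    π * Rpos + (1 - π) * Rneg =
      π * (((1 - α2) * T1 - (1 - α1) * T2) / (α1 - α2))
        + (1 - π) * ((α1 * T2 - α2 * T1) / (α1 - α2)) ∧
    (∀ Rpos' Rneg' : ℝ,
      T1 = α1 * Rpos' + (1 - α1) * Rneg' →
      T2 = α2 * Rpos' + (1 - α2) * Rneg' →
      Rpos' = Rpos ∧ Rneg' = Rneg) :=
  ntmp_stratify_and_solve_general π α1 α2 hne Rpos Rneg T1 T2 hT1 hT2
end
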